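/- Let ∂ be the covariant exterior derivative on Weyl-bundle-valued forms induced by a symplectic connection ∇ with Christoffel symbols Γ, given by ∂a = da − (1/ν)[Γ̄, a] with Γ̄ = (1/2) ω_{ki} Γ^k_{rj} y^i y^j dx^r. Then for any smooth vector field X, the anticommutator satisfies ∂ ∘ i(X) + i(X) ∘ ∂ = L_X − (∇_i X)^j y^i ∂_{y^j}, a Cartan-type formula for the Weyl bundle. -/

import Mathlib

open Finset MvPolynomial

/-! Local-coordinate (polynomial-coefficient) model of the Weyl bundle of a symplectic
manifold: the base coordinates `x¹,…,xᵐ` are the `Sum.inl` variables and the fibre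
coordinates `y¹,…,yᵐ` are the `Sum.inr` variables. -/

/-- A section of the Weyl bundle over the coordinate chart: a series
`Σ ν^k a_k(x,y)` with polynomial coefficients. -/
abbrev WeylSec (m : ℕ) := ℕ → MvPolynomial (Fin m ⊕ Fin m) ℝ

/-- Weyl-bundle valued `q`-forms, in components. -/
abbrev WeylSecForm (m q : ℕ) := (Fin q → Fin m) → WeylSec m

/-- A Weyl-valued form is alternating. -/
def IsAltSecForm {m q : ℕ} (a : WeylSecForm m q) : Prop :=
  ∀ (σ : Equiv.Perm (Fin q)) (v : Fin q → Fin m),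
    a (v ∘ σ) = (Equiv.Perm.sign σ : ℤ) • a v

/-- Functions of the base coordinates only, viewed inside the Weyl bundle. -/
noncomputable def baseP {m : ℕ} (f : MvPolynomial (Fin m) ℝ) :
    MvPolynomial (Fin m ⊕ Fin m) ℝ := rename Sum.inl f

/-- The fibre variable `yⁱ`. -/
noncomputable def yVar {m : ℕ} (i : Fin m) : MvPolynomial (Fin m ⊕ Fin m) ℝ :=
  X (Sum.inr i)

/-- The `t`-fold fibrewise transvectant (`y`-derivatives only). -/
noncomputable def transvY {m : ℕ} (Λ : Fin m → Fin m → ℝ) :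
    ℕ → MvPolynomial (Fin m ⊕ Fin m) ℝ → MvPolynomial (Fin m ⊕ Fin m) ℝ →
      MvPolynomial (Fin m ⊕ Fin m) ℝ
  | 0, f, g => f * g
  | t + 1, f, g => ∑ i : Fin m, ∑ j : Fin m,
      Λ i j • transvY Λ t (pderiv (Sum.inr i) f) (pderiv (Sum.inr j) g)

/-- The fibrewise Moyal product on sections of the Weyl bundle. -/
noncomputable def moyalY {m : ℕ} (Λ : Fin m → Fin m → ℝ) (a b : WeylSec m) :
    WeylSec m :=
  fun n => ∑ t ∈ range (n + 1), ∑ k ∈ range (n - t + 1),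
    ((2 ^ t * (t.factorial : ℝ))⁻¹) • transvY Λ t (a k) (b (n - t - k))

/-- The graded commutator of a Weyl-valued `1`-form with a `q`-form, in components. -/
noncomputable def gradedCommY {m q : ℕ} (Λ : Fin m → Fin m → ℝ)
    (s : WeylSecForm m 1) (a : WeylSecForm m q) : WeylSecForm m (q + 1) :=
  fun v => ∑ t : Fin (q + 1), ((-1 : ℝ) ^ (t : ℕ)) •
    (moyalY Λ (s fun _ => v t) (a (v ∘ t.succAbove))
      - moyalY Λ (a (v ∘ t.succAbove)) (s fun _ => v t))

/-- Division by `ν` (defined on series with vanishing constant term). -/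
def nuDiv {m : ℕ} (a : WeylSec m) : WeylSec m := fun n => a (n + 1)

/-- The exterior derivative in the base variables, `da = dx^k ∧ ∂a/∂x^k`. -/
noncomputable def dBase {m q : ℕ} (a : WeylSecForm m q) : WeylSecForm m (q + 1) :=
  fun v n => ∑ t : Fin (q + 1),
    ((-1 : ℝ) ^ (t : ℕ)) • pderiv (Sum.inl (v t)) (a (v ∘ t.succAbove) n)

/-- `Γ̄ = ½ ω_{ki} Γ^k_{rj} yⁱ yʲ dx^r`, built from the Christoffel symbols `Γ` of the
symplectic connection (functions of the base variables). -/
noncomputable def gammaBar {m : ℕ} (ω : Fin m → Fin m → ℝ)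
    (Γ : Fin m → Fin m → Fin m → MvPolynomial (Fin m) ℝ) : WeylSecForm m 1 :=
  fun v n =>
    if n = 0 then
      (1 / 2 : ℝ) • ∑ k : Fin m, ∑ i : Fin m, ∑ j : Fin m,
        ω k i • (baseP (Γ k (v 0) j) * yVar i * yVar j)
    else 0

/-- The covariant exterior derivative `∂a = da − (1/ν)[Γ̄, a]` on Weyl-bundle valued
forms. -/
noncomputable def covD {m q : ℕ} (Λ ω : Fin m → Fin m → ℝ)
    (Γ : Fin m → Fin m → Fin m → MvPolynomial (Fin m) ℝ)
    (a : WeylSecForm m q) : WeylSecForm m (q + 1) :=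
  fun v => dBase a v - nuDiv (gradedCommY Λ (gammaBar ω Γ) a v)

/-- Contraction `i(X)` with a vector field `X = X^k ∂/∂x^k` (components `X0 k`,
functions of the base variables). -/
noncomputable def contractX {m q : ℕ} (X0 : Fin m → MvPolynomial (Fin m) ℝ)
    (a : WeylSecForm m (q + 1)) : WeylSecForm m q :=
  fun w n => ∑ k : Fin m, baseP (X0 k) * a (Fin.cons k w) n

/-- The Lie derivative `L_X` on Weyl-bundle valued forms: it acts as the Lie derivative
on the (covariant) tensor coefficients — both the symmetric `y`-indices and the
antisymmetric form indices — together with `X^k ∂/∂x^k` on the base. -/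
noncomputable def lieDer {m q : ℕ} (X0 : Fin m → MvPolynomial (Fin m) ℝ)
    (a : WeylSecForm m q) : WeylSecForm m q :=
  fun v n =>
    (∑ k : Fin m, baseP (X0 k) * pderiv (Sum.inl k) (a v n))
    + (∑ i : Fin m, ∑ j : Fin m,
        baseP (pderiv i (X0 j)) * yVar i * pderiv (Sum.inr j) (a v n))
    + (∑ t : Fin q, ∑ k : Fin m,
        baseP (pderiv (v t) (X0 k)) * a (Function.update v t k) n)

/-! Since `Γ̄` is quadratic in the fibre variables, `(1/ν)[Γ̄, ·]` is the Poisson bracket with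
`Γ̄`; as `ω_{ki} Γᵏ_{rj}` is symmetric in `i, j` and `Λ` inverts `ω`, this bracket is the vector
field `Γᵏ_{rj} yʲ ∂/∂yᵏ`. So `∂` is the exterior derivative built from the derivations
`∇ᵣ = ∂/∂xʳ - Γᵏ_{rj} yʲ ∂/∂yᵏ`. For any family of derivations acting as `∂/∂xʳ` on base
functions, the usual proof of Cartan's formula goes through: in `∂ i(X) + i(X) ∂` the terms in
which `∇` differentiates the form cancel by antisymmetry, leaving `Xᵏ ∇ₖ` and the terms in which
`∇` differentiates `Xᵏ`; finally `Xᵏ ∇ₖ = Xᵏ ∂ₖ - Γʲ_{ik} Xᵏ yⁱ ∂/∂yʲ` by the symmetry of `Γ`. -/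

section

variable {m : ℕ}

lemma baseP_add (f g : MvPolynomial (Fin m) ℝ) : baseP (f + g) = baseP f + baseP g :=
  map_add _ f g

lemma pderiv_inr_baseP (k : Fin m) (f : MvPolynomial (Fin m) ℝ) :
    pderiv (Sum.inr k) (baseP f) = 0 :=
  pderiv_eq_zero_of_notMem_vars fun h => by
    simpa using vars_rename (R := ℝ) Sum.inl f h

lemma pderiv_inl_baseP (k : Fin m) (f : MvPolynomial (Fin m) ℝ) :
    pderiv (Sum.inl k) (baseP f) = baseP (pderiv k f) :=
  pderiv_rename Sum.inl_injective k f

lemma pderiv_inr_yVar (p i : Fin m) :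
    pderiv (Sum.inr p) (yVar i) = if i = p then 1 else 0 := by
  simp [yVar, pderiv_X, Pi.single_apply]

noncomputable def fibreLinear (L : Fin m → MvPolynomial (Fin m) ℝ) :
    MvPolynomial (Fin m ⊕ Fin m) ℝ :=
  ∑ j, baseP (L j) * yVar j

noncomputable def fibreQuadratic (Q : Fin m → Fin m → MvPolynomial (Fin m) ℝ) :
    MvPolynomial (Fin m ⊕ Fin m) ℝ :=
  ∑ i, ∑ j, baseP (Q i j) * yVar i * yVar j

lemma sum_smul_fibreLinear {ι : Type*} (s : Finset ι) (c : ι → ℝ)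
    (L : ι → Fin m → MvPolynomial (Fin m) ℝ) :
    ∑ p ∈ s, c p • fibreLinear (L p) = fibreLinear fun j => ∑ p ∈ s, c p • L p j := by
  simp only [fibreLinear, smul_sum, baseP, map_sum, map_smul, sum_mul, smul_mul_assoc]
  exact sum_comm

lemma pderiv_inr_fibreLinear (L : Fin m → MvPolynomial (Fin m) ℝ) (p : Fin m) :
    pderiv (Sum.inr p) (fibreLinear L) = baseP (L p) := by
  simp [fibreLinear, pderiv_inr_baseP, pderiv_inr_yVar]

lemma pderiv_inr_fibreQuadratic (Q : Fin m → Fin m → MvPolynomial (Fin m) ℝ) (p : Fin m) :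
    pderiv (Sum.inr p) (fibreQuadratic Q) = fibreLinear fun j => Q p j + Q j p := by
  simp only [fibreLinear, baseP_add, add_mul, sum_add_distrib]
  simp [fibreQuadratic, pderiv_inr_baseP, pderiv_inr_yVar, mul_comm, sum_add_distrib]

lemma pderiv_inr_three_smul_fibreQuadratic (c : ℝ) (Q : Fin m → Fin m → MvPolynomial (Fin m) ℝ)
    (a b d : Fin m) :
    pderiv (Sum.inr a) (pderiv (Sum.inr b) (pderiv (Sum.inr d) (c • fibreQuadratic Q))) = 0 := by
  simp [pderiv_inr_fibreQuadratic, pderiv_inr_fibreLinear, pderiv_inr_baseP]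

section Transvectant

variable (Λ : Fin m → Fin m → ℝ)

lemma transvY_zero_left (t : ℕ) (g : MvPolynomial (Fin m ⊕ Fin m) ℝ) :
    transvY Λ t 0 g = 0 := by
  induction t generalizing g with
  | zero => simp [transvY]
  | succ t ih => simp [transvY, ih]

lemma transvY_zero_right (t : ℕ) (f : MvPolynomial (Fin m ⊕ Fin m) ℝ) :
    transvY Λ t f 0 = 0 := by
  induction t generalizing f with
  | zero => simp [transvY]
  | succ t ih => simp [transvY, ih]

lemma transvY_add_three_of_pderiv_three_left (t : ℕ) {f : MvPolynomial (Fin m ⊕ Fin m) ℝ}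
    (hf : ∀ a b c : Fin m,
      pderiv (Sum.inr a) (pderiv (Sum.inr b) (pderiv (Sum.inr c) f)) = 0)
    (g : MvPolynomial (Fin m ⊕ Fin m) ℝ) :
    transvY Λ (t + 3) f g = 0 := by
  induction t generalizing f g with
  | zero => simp [transvY, hf]
  | succ t ih =>
    rw [transvY]
    refine sum_eq_zero fun i _ => sum_eq_zero fun j _ => ?_
    rw [ih (fun a b c => by rw [hf b c i, map_zero]), smul_zero]

lemma transvY_add_three_of_pderiv_three_right (t : ℕ) {g : MvPolynomial (Fin m ⊕ Fin m) ℝ}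
    (hg : ∀ a b c : Fin m,
      pderiv (Sum.inr a) (pderiv (Sum.inr b) (pderiv (Sum.inr c) g)) = 0)
    (f : MvPolynomial (Fin m ⊕ Fin m) ℝ) :
    transvY Λ (t + 3) f g = 0 := by
  induction t generalizing f g with
  | zero => simp [transvY, hg]
  | succ t ih =>
    rw [transvY]
    refine sum_eq_zero fun i _ => sum_eq_zero fun j _ => ?_
    rw [ih (fun a b c => by rw [hg b c j, map_zero]), smul_zero]

lemma transvY_one (f g : MvPolynomial (Fin m ⊕ Fin m) ℝ) :
    transvY Λ 1 f g = ∑ i, ∑ j, Λ i j • (pderiv (Sum.inr i) f * pderiv (Sum.inr j) g) := by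
  simp [transvY]

variable {Λ}

lemma transvY_one_swap (hΛ : ∀ i j, Λ i j = -Λ j i) (f g : MvPolynomial (Fin m ⊕ Fin m) ℝ) :
    transvY Λ 1 g f = -transvY Λ 1 f g := by
  rw [transvY_one, transvY_one, sum_comm, ← sum_neg_distrib]
  refine sum_congr rfl fun i _ => ?_
  rw [← sum_neg_distrib]
  refine sum_congr rfl fun j _ => ?_
  rw [hΛ j i, neg_smul, mul_comm]

lemma transvY_two_swap (hΛ : ∀ i j, Λ i j = -Λ j i) (f g : MvPolynomial (Fin m ⊕ Fin m) ℝ) :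
    transvY Λ 2 g f = transvY Λ 2 f g := by
  simp only [transvY, smul_sum, smul_smul]
  rw [sum_comm]
  refine sum_congr rfl fun i _ => sum_congr rfl fun j _ => ?_
  rw [sum_comm]
  refine sum_congr rfl fun k _ => sum_congr rfl fun l _ => ?_
  rw [hΛ j i, hΛ l k, neg_mul_neg, mul_comm (pderiv (Sum.inr l) _)]

end Transvectant

section Moyal

variable (Λ : Fin m → Fin m → ℝ)

lemma moyalY_single_left (G : MvPolynomial (Fin m ⊕ Fin m) ℝ) (c : WeylSec m) (n : ℕ) :
    moyalY Λ (fun k => if k = 0 then G else 0) c n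
      = ∑ t ∈ range (n + 1), (2 ^ t * (t.factorial : ℝ))⁻¹ • transvY Λ t G (c (n - t)) := by
  refine sum_congr rfl fun t _ => ?_
  rw [sum_eq_single_of_mem 0 (mem_range.2 (Nat.succ_pos _))]
  · simp
  · intro k _ hk
    simp [hk, transvY_zero_left]

lemma moyalY_single_right (G : MvPolynomial (Fin m ⊕ Fin m) ℝ) (c : WeylSec m) (n : ℕ) :
    moyalY Λ c (fun k => if k = 0 then G else 0) n
      = ∑ t ∈ range (n + 1), (2 ^ t * (t.factorial : ℝ))⁻¹ • transvY Λ t (c (n - t)) G := by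
  refine sum_congr rfl fun t _ => ?_
  rw [sum_eq_single_of_mem (n - t) (mem_range.2 (Nat.lt_succ_self _))]
  · simp
  · intro k hk hkne
    have hpos : n - t - k ≠ 0 := by
      have := mem_range.1 hk
      omega
    simp [hpos, transvY_zero_right]

variable {Λ}

/-- In the commutator the transvectants of order `0` and `2` cancel, those of order `1` add up,
and those of order `≥ 3` vanish because `G` is at most quadratic in `y`. -/
lemma moyalY_sub_moyalY_succ (hΛ : ∀ i j, Λ i j = -Λ j i)
    {G : MvPolynomial (Fin m ⊕ Fin m) ℝ}
    (hG : ∀ a b c : Fin m,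
      pderiv (Sum.inr a) (pderiv (Sum.inr b) (pderiv (Sum.inr c) G)) = 0)
    (c : WeylSec m) (n : ℕ) :
    moyalY Λ (fun k => if k = 0 then G else 0) c (n + 1)
      - moyalY Λ c (fun k => if k = 0 then G else 0) (n + 1) = transvY Λ 1 G (c n) := by
  rw [moyalY_single_left, moyalY_single_right, ← sum_sub_distrib,
    sum_eq_single_of_mem 1 (mem_range.2 (by omega))]
  · rw [Nat.add_sub_cancel, transvY_one_swap hΛ G, smul_neg, sub_neg_eq_add, ← add_smul]
    norm_num
  · intro t _ ht
    match t, ht with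
    | 0, _ => simp [transvY, mul_comm]
    | 2, _ => rw [transvY_two_swap hΛ, sub_self]
    | s + 3, _ =>
      rw [transvY_add_three_of_pderiv_three_left Λ s hG,
        transvY_add_three_of_pderiv_three_right Λ s hG, sub_self]

end Moyal

lemma sum_mul_eq_ite_comm {ι R : Type*} [Fintype ι] [DecidableEq ι] [CommRing R]
    {ω Λ : ι → ι → R} (h : ∀ i k, ∑ j, ω j k * Λ i j = if i = k then 1 else 0) (k q : ι) :
    ∑ p, ω k p * Λ p q = if k = q then 1 else 0 := by
  have hΛω : (Matrix.of Λ * Matrix.of ω : Matrix ι ι R) = 1 := by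
    ext i k
    simp [Matrix.mul_apply, Matrix.one_apply, ← h, mul_comm]
  simpa [Matrix.mul_apply, Matrix.one_apply] using
    congrArg (fun M : Matrix ι ι R => M k q) (mul_eq_one_comm.1 hΛω)

lemma pderiv_inr_half_fibreQuadratic {Q : Fin m → Fin m → MvPolynomial (Fin m) ℝ}
    (hQ : ∀ i j, Q i j = Q j i) (p : Fin m) :
    pderiv (Sum.inr p) ((1 / 2 : ℝ) • fibreQuadratic Q) = fibreLinear (Q p) := by
  rw [Derivation.map_smul, pderiv_inr_fibreQuadratic]
  simp_rw [hQ _ p, ← two_smul ℝ, fibreLinear, baseP, map_smul, smul_mul_assoc, ← smul_sum,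
    smul_smul]
  norm_num

section GammaBar

variable (ω : Fin m → Fin m → ℝ) (Γ : Fin m → Fin m → Fin m → MvPolynomial (Fin m) ℝ)

lemma gammaBar_const (r : Fin m) :
    gammaBar ω Γ (fun _ => r) = fun n =>
      if n = 0 then (1 / 2 : ℝ) • fibreQuadratic (fun i j => ∑ k, ω k i • Γ k r j) else 0 := by
  funext n
  simp only [gammaBar, fibreQuadratic, baseP, map_sum, map_smul, sum_mul, smul_mul_assoc]
  rw [sum_comm]
  simp_rw [sum_comm (γ := Fin m) (s := univ) (t := univ) (f := fun k j => ω k _ • _)]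

variable {ω Γ} {Λ : Fin m → Fin m → ℝ}

lemma transvY_one_gammaBar (hωΛ : ∀ i k, ∑ j, ω j k * Λ i j = if i = k then 1 else 0)
    (hsymp : ∀ r i j, ∑ k, ω k i • Γ k r j = ∑ k, ω k j • Γ k r i)
    (r : Fin m) (c : MvPolynomial (Fin m ⊕ Fin m) ℝ) :
    transvY Λ 1 ((1 / 2 : ℝ) • fibreQuadratic (fun i j => ∑ k, ω k i • Γ k r j)) c
      = ∑ k, fibreLinear (Γ k r) * pderiv (Sum.inr k) c := by
  have hcontract : ∀ q, ∑ p, Λ p q • fibreLinear (fun j => ∑ k, ω k p • Γ k r j)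
      = fibreLinear (Γ q r) := by
    intro q
    rw [sum_smul_fibreLinear]
    congr 1
    funext j
    simp only [smul_sum, smul_smul]
    rw [sum_comm]
    simp [← sum_smul, mul_comm, sum_mul_eq_ite_comm hωΛ]
  rw [transvY_one, sum_comm]
  refine sum_congr rfl fun q _ => ?_
  simp only [pderiv_inr_half_fibreQuadratic (hsymp r), ← hcontract q, sum_mul, smul_mul_assoc]

end GammaBar

/-- The symplectic connection `∇_{∂/∂xʳ}` acting on Weyl-bundle sections. -/
noncomputable def nablaY (Γ : Fin m → Fin m → Fin m → MvPolynomial (Fin m) ℝ) (r : Fin m) :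
    Derivation ℝ (MvPolynomial (Fin m ⊕ Fin m) ℝ) (MvPolynomial (Fin m ⊕ Fin m) ℝ) :=
  pderiv (Sum.inl r) - ∑ k, fibreLinear (Γ k r) • pderiv (Sum.inr k)

lemma nablaY_apply (Γ : Fin m → Fin m → Fin m → MvPolynomial (Fin m) ℝ) (r : Fin m)
    (p : MvPolynomial (Fin m ⊕ Fin m) ℝ) :
    nablaY Γ r p = pderiv (Sum.inl r) p - ∑ k, fibreLinear (Γ k r) * pderiv (Sum.inr k) p := by
  rw [nablaY, Derivation.sub_apply]
  congr 1
  have hsum := congrFun (map_sum Derivation.coeFnAddMonoidHom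
    (fun k => fibreLinear (Γ k r) • pderiv (Sum.inr k)) univ) p
  simpa only [Derivation.coeFnAddMonoidHom_apply, Finset.sum_apply, Derivation.smul_apply,
    smul_eq_mul] using hsum

lemma nablaY_baseP (Γ : Fin m → Fin m → Fin m → MvPolynomial (Fin m) ℝ) (r : Fin m)
    (f : MvPolynomial (Fin m) ℝ) : nablaY Γ r (baseP f) = baseP (pderiv r f) := by
  simp [nablaY_apply, pderiv_inl_baseP, pderiv_inr_baseP]

noncomputable def extDerivOf {q : ℕ}
    (D : Fin m → Derivation ℝ (MvPolynomial (Fin m ⊕ Fin m) ℝ) (MvPolynomial (Fin m ⊕ Fin m) ℝ))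
    (b : WeylSecForm m q) : WeylSecForm m (q + 1) :=
  fun v n => ∑ t : Fin (q + 1), ((-1 : ℝ) ^ (t : ℕ)) • D (v t) (b (v ∘ t.succAbove) n)

lemma covD_eq_extDerivOf {Λ ω : Fin m → Fin m → ℝ}
    {Γ : Fin m → Fin m → Fin m → MvPolynomial (Fin m) ℝ}
    (hΛ : ∀ i j, Λ i j = -Λ j i)
    (hωΛ : ∀ i k, ∑ j, ω j k * Λ i j = if i = k then 1 else 0)
    (hsymp : ∀ r i j, ∑ k, ω k i • Γ k r j = ∑ k, ω k j • Γ k r i)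
    {q : ℕ} (b : WeylSecForm m q) : covD Λ ω Γ b = extDerivOf (nablaY Γ) b := by
  funext v n
  simp only [covD, dBase, nuDiv, gradedCommY, extDerivOf, Pi.sub_apply, Finset.sum_apply,
    Pi.smul_apply, gammaBar_const, ← sum_sub_distrib, ← smul_sub, nablaY_apply]
  refine sum_congr rfl fun t _ => ?_
  rw [moyalY_sub_moyalY_succ hΛ (pderiv_inr_three_smul_fibreQuadratic _ _),
    transvY_one_gammaBar hωΛ hsymp]

lemma IsAltSecForm.apply_cons_comp_succAbove {q : ℕ} {a : WeylSecForm m (q + 1)}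
    (halt : IsAltSecForm a) (v : Fin (q + 1) → Fin m) (t : Fin (q + 1)) (k : Fin m) :
    a (Fin.cons k (v ∘ t.succAbove)) = ((-1 : ℝ) ^ (t : ℕ)) • a (Function.update v t k) := by
  have hcomp : Function.update v t k ∘ ⇑(t.cycleRange)⁻¹ = Fin.cons k (v ∘ t.succAbove) := by
    funext x
    cases x using Fin.cases with
    | zero => simp [Equiv.Perm.inv_def, Fin.cycleRange_symm_zero]
    | succ j =>
      simp [Equiv.Perm.inv_def, Fin.cycleRange_symm_succ, Fin.succAbove_ne t j]
  rw [← hcomp, halt, Equiv.Perm.sign_inv, Fin.sign_cycleRange, ← Int.cast_smul_eq_zsmul ℝ]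
  push_cast
  rfl

section CartanFormula

variable {q : ℕ}
  (D : Fin m → Derivation ℝ (MvPolynomial (Fin m ⊕ Fin m) ℝ) (MvPolynomial (Fin m ⊕ Fin m) ℝ))
  (X0 : Fin m → MvPolynomial (Fin m) ℝ)

lemma extDerivOf_cons (a : WeylSecForm m (q + 1)) (k : Fin m) (v : Fin (q + 1) → Fin m) (n : ℕ) :
    extDerivOf D a (Fin.cons k v) n
      = D k (a v n) - ∑ t : Fin (q + 1),
          ((-1 : ℝ) ^ (t : ℕ)) • D (v t) (a (Fin.cons k (v ∘ t.succAbove)) n) := by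
  have hsucc : ∀ t : Fin (q + 1), (Fin.cons k v : Fin (q + 2) → Fin m) ∘ t.succ.succAbove
      = Fin.cons k (v ∘ t.succAbove) := by
    intro t; funext x
    cases x using Fin.cases with
    | zero => simp
    | succ i => simp [Fin.succ_succAbove_succ]
  simp [extDerivOf, Fin.sum_univ_succ, hsucc, pow_succ, sub_eq_add_neg]

lemma contractX_extDerivOf (a : WeylSecForm m (q + 1)) (v : Fin (q + 1) → Fin m) (n : ℕ) :
    contractX X0 (extDerivOf D a) v n
      = ∑ k, baseP (X0 k) * D k (a v n) - ∑ t : Fin (q + 1), ((-1 : ℝ) ^ (t : ℕ)) •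
          ∑ k, baseP (X0 k) * D (v t) (a (Fin.cons k (v ∘ t.succAbove)) n) := by
  simp only [contractX, extDerivOf_cons, mul_sub, sum_sub_distrib, mul_sum, smul_sum, mul_smul_comm]
  rw [sum_comm]

variable {D}

lemma extDerivOf_contractX (hD : ∀ r f, D r (baseP f) = baseP (pderiv r f))
    {a : WeylSecForm m (q + 1)} (halt : IsAltSecForm a) (v : Fin (q + 1) → Fin m) (n : ℕ) :
    extDerivOf D (contractX X0 a) v n
      = ∑ t : Fin (q + 1), ∑ k, baseP (pderiv (v t) (X0 k)) * a (Function.update v t k) n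
        + ∑ t : Fin (q + 1), ((-1 : ℝ) ^ (t : ℕ)) •
          ∑ k, baseP (X0 k) * D (v t) (a (Fin.cons k (v ∘ t.succAbove)) n) := by
  simp only [extDerivOf, contractX, map_sum, Derivation.leibniz, hD, smul_eq_mul, sum_add_distrib,
    smul_add]
  rw [add_comm]
  congr 1
  refine sum_congr rfl fun t _ => ?_
  simp only [halt.apply_cons_comp_succAbove, Pi.smul_apply, smul_mul_assoc, smul_sum, smul_smul,
    ← mul_pow, neg_one_mul, neg_neg, one_pow, one_smul]
  exact sum_congr rfl fun k _ => mul_comm _ _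

theorem extDerivOf_contractX_add_contractX_extDerivOf
    (hD : ∀ r f, D r (baseP f) = baseP (pderiv r f))
    {a : WeylSecForm m (q + 1)} (halt : IsAltSecForm a) (v : Fin (q + 1) → Fin m) (n : ℕ) :
    extDerivOf D (contractX X0 a) v n + contractX X0 (extDerivOf D a) v n
      = ∑ k, baseP (X0 k) * D k (a v n)
        + ∑ t : Fin (q + 1), ∑ k, baseP (pderiv (v t) (X0 k)) * a (Function.update v t k) n := by
  rw [extDerivOf_contractX X0 hD halt, contractX_extDerivOf]
  abel

end CartanFormula

lemma sum_baseP_mul_nablaY {Γ : Fin m → Fin m → Fin m → MvPolynomial (Fin m) ℝ}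
    (hΓsym : ∀ k r j, Γ k r j = Γ k j r) (X0 : Fin m → MvPolynomial (Fin m) ℝ)
    (p : MvPolynomial (Fin m ⊕ Fin m) ℝ) :
    ∑ k, baseP (X0 k) * nablaY Γ k p
      = ∑ k, baseP (X0 k) * pderiv (Sum.inl k) p
        - ∑ i, ∑ j, baseP (∑ k, Γ j i k * X0 k) * yVar i * pderiv (Sum.inr j) p := by
  simp only [nablaY_apply, mul_sub, sum_sub_distrib, fibreLinear, baseP, map_sum, map_mul,
    mul_sum, sum_mul]
  rw [sub_right_inj, sum_comm_cycle]
  refine sum_congr rfl fun i _ => ?_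
  rw [sum_comm]
  refine sum_congr rfl fun j _ => sum_congr rfl fun k _ => ?_
  rw [hΓsym j i k]
  ring

end

theorem weyl_cartan_formula_general
    {m : ℕ} (Λ ω : Fin m → Fin m → ℝ)
    (Γ : Fin m → Fin m → Fin m → MvPolynomial (Fin m) ℝ)
    (hΛskew : ∀ i j, Λ i j = - Λ j i)
    (hωΛ : ∀ i k, ∑ j : Fin m, ω j k * Λ i j = if i = k then 1 else 0)
    (hΓsym : ∀ k r j, Γ k r j = Γ k j r)
    (hsymp : ∀ r i j,
      ∑ k : Fin m, ω k i • Γ k r j = ∑ k : Fin m, ω k j • Γ k r i)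
    (X0 : Fin m → MvPolynomial (Fin m) ℝ)
    (q : ℕ) (a : WeylSecForm m (q + 1)) (halt : IsAltSecForm a) :
    ∀ (v : Fin (q + 1) → Fin m) (n : ℕ),
      covD Λ ω Γ (contractX X0 a) v n + contractX X0 (covD Λ ω Γ a) v n
        = lieDer X0 a v n
          - ∑ i : Fin m, ∑ j : Fin m,
              baseP (pderiv i (X0 j) + ∑ k : Fin m, Γ j i k * X0 k)
                * yVar i * pderiv (Sum.inr j) (a v n) := by
  intro v n
  rw [covD_eq_extDerivOf hΛskew hωΛ hsymp, covD_eq_extDerivOf hΛskew hωΛ hsymp,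
    extDerivOf_contractX_add_contractX_extDerivOf X0 (nablaY_baseP Γ) halt,
    sum_baseP_mul_nablaY hΓsym]
  simp only [lieDer, baseP_add, add_mul, sum_add_distrib]
  abel

/-- the Cartan-type formula on the Weyl bundle:
`∂ ∘ i(X) + i(X) ∘ ∂ = L_X − (∇_i X)^j yⁱ ∂/∂yʲ`, where
`(∇_i X)^j = ∂_i X^j + Γ^j_{ik} X^k`. -/
theorem weyl_cartan_formula
    {m : ℕ} (Λ ω : Fin m → Fin m → ℝ)
    (Γ : Fin m → Fin m → Fin m → MvPolynomial (Fin m) ℝ)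
    (hΛskew : ∀ i j, Λ i j = - Λ j i)
    (hωskew : ∀ i j, ω i j = - ω j i)
    (hωΛ : ∀ i k, ∑ j : Fin m, ω j k * Λ i j = if i = k then 1 else 0)
    (hΓsym : ∀ k r j, Γ k r j = Γ k j r)
    (hsymp : ∀ r i j,
      ∑ k : Fin m, ω k i • Γ k r j = ∑ k : Fin m, ω k j • Γ k r i)
    (X0 : Fin m → MvPolynomial (Fin m) ℝ)
    (q : ℕ) (a : WeylSecForm m (q + 1)) (halt : IsAltSecForm a) :
    ∀ (v : Fin (q + 1) → Fin m) (n : ℕ),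
      covD Λ ω Γ (contractX X0 a) v n + contractX X0 (covD Λ ω Γ a) v n
        = lieDer X0 a v n
          - ∑ i : Fin m, ∑ j : Fin m,
              baseP (pderiv i (X0 j) + ∑ k : Fin m, Γ j i k * X0 k)
                * yVar i * pderiv (Sum.inr j) (a v n) :=
  weyl_cartan_formula_general Λ ω Γ hΛskew hωΛ hΓsym hsymp X0 q a halt
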